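/- arXiv:1303.3685 — 3 statements merged into one kernel-verified Lean document; each statement's English description precedes it below -/
import Mathlib

section
/- Let G(z) = (z + a)^{1−α} (z − b)^{α} with a, b > 0, α ∈ (0,1), and αa = (1−α)b, so that G is a conformal map from the upper half-plane ℍ onto ℍ minus a straight slit starting at 0, with 0 mapped to the tip of the slit. Then the function y ↦ Im G(iy) is increasing on (0,∞). In particular, for every y > 0, Im G(iy) is at least the imaginary part of the tip of the slit, i.e. Im G(iy) ≥ Im G(0). -/
/-!
Along the imaginary axis, `d/dy G(iy) = i G'(iy)`, and the normalization `αa = (1-α)b` collapses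
the logarithmic derivative to `G'(z) = z (z+a)^{-α} (z-b)^{α-1}`. Hence
`d/dy Im G(iy) = -y Im((iy+a)^{-α} (iy-b)^{α-1})`, and this is positive because the argument of
the product is `-(α arg(iy+a) + (1-α) arg(iy-b)) ∈ (-π, 0)`. The bound at `y = 0` follows from
continuity of `y ↦ G(iy)` on `[0, ∞)`, the principal powers being continuous up to the
negative real axis from above.
-/

open Complex Set

namespace Complex

theorem arg_mem_Ioo_of_im_pos {z : ℂ} (hz : 0 < z.im) : arg z ∈ Ioo 0 Real.pi := by
  refine ⟨lt_of_le_of_ne (arg_nonneg_iff.2 hz.le) fun h => ?_,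
    arg_lt_pi_iff.2 (Or.inr hz.ne')⟩
  exact hz.ne' (arg_eq_zero_iff.1 h.symm).2

theorem im_cpow_mul_cpow_neg {w₁ w₂ : ℂ} {p q : ℝ} (hw₁ : 0 < w₁.im) (hw₂ : 0 < w₂.im)
    (hp : p < 0) (hq : q < 0) (hpq : -1 ≤ p + q) :
    (w₁ ^ (p : ℂ) * w₂ ^ (q : ℂ)).im < 0 := by
  have hw₁0 : w₁ ≠ 0 := fun h => hw₁.ne' (by simp [h])
  have hw₂0 : w₂ ≠ 0 := fun h => hw₂.ne' (by simp [h])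
  obtain ⟨h₁, h₁'⟩ := arg_mem_Ioo_of_im_pos hw₁
  obtain ⟨h₂, h₂'⟩ := arg_mem_Ioo_of_im_pos hw₂
  have hθ : (log w₁ * p + log w₂ * q).im = p * arg w₁ + q * arg w₂ := by
    simp only [add_im, mul_im, ofReal_im, mul_zero, log_im, ofReal_re, zero_add]
    ring
  rw [cpow_def_of_ne_zero hw₁0, cpow_def_of_ne_zero hw₂0, ← exp_add, exp_im, hθ]
  refine mul_neg_of_pos_of_neg (Real.exp_pos _) (Real.sin_neg_of_neg_of_neg_pi_lt ?_ ?_)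
  · nlinarith [mul_neg_of_neg_of_pos hp h₁, mul_neg_of_neg_of_pos hq h₂]
  · nlinarith [mul_lt_mul_of_neg_left h₁' hp, mul_lt_mul_of_neg_left h₂' hq, Real.pi_pos]

theorem continuousWithinAt_cpow_const_of_im_nonneg {z : ℂ} (c : ℂ) (hz : z ≠ 0) :
    ContinuousWithinAt (· ^ c) {w : ℂ | 0 ≤ w.im} z := by
  by_cases hslit : z ∈ slitPlane
  · exact (continuousAt_cpow_const hslit).continuousWithinAt
  obtain ⟨hre, him⟩ : z.re < 0 ∧ z.im = 0 := by
    rw [mem_slitPlane_iff, not_or, not_lt, not_not] at hslit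
    exact ⟨lt_of_le_of_ne hslit.1 fun h => hz (ext h hslit.2), hslit.2⟩
  have hexp : ContinuousWithinAt (fun w => exp (log w * c)) {w : ℂ | 0 ≤ w.im} z :=
    ((continuousWithinAt_log_of_re_neg_of_im_zero hre him).mul continuousWithinAt_const).cexp
  refine hexp.congr_of_eventuallyEq (mem_nhdsWithin_of_mem_nhds ?_) (cpow_def_of_ne_zero hz c)
  filter_upwards [isOpen_ne.mem_nhds hz] with w hw
  exact cpow_def_of_ne_zero hw c

end Complex

noncomputable def slitMap (a b α : ℝ) (z : ℂ) : ℂ :=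
  (z + (a : ℂ)) ^ ((1 - α : ℝ) : ℂ) * (z - (b : ℂ)) ^ ((α : ℝ) : ℂ)

section slitMap

variable {a b α : ℝ}

theorem hasDerivAt_slitMap (hab : α * a = (1 - α) * b) {z : ℂ} (h₁ : z + a ∈ slitPlane)
    (h₂ : z - b ∈ slitPlane) :
    HasDerivAt (slitMap a b α)
      (z * (z + a) ^ ((-α : ℝ) : ℂ) * (z - b) ^ ((α - 1 : ℝ) : ℂ)) z := by
  have hA := ((hasDerivAt_id z).add_const (a : ℂ)).cpow_const (c := ((1 - α : ℝ) : ℂ)) h₁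
  have hB := ((hasDerivAt_id z).sub_const (b : ℂ)).cpow_const (c := ((α : ℝ) : ℂ)) h₂
  refine (hA.mul hB).congr_deriv ?_
  have hsplit : ∀ {w : ℂ} (c : ℝ), w ≠ 0 → w ^ ((c + 1 : ℝ) : ℂ) = w ^ (c : ℂ) * w :=
    fun c hw => by
    rw [ofReal_add, ofReal_one, cpow_add _ _ hw, cpow_one]
  have hA' := hsplit (-α) (slitPlane_ne_zero h₁)
  have hB' := hsplit (α - 1) (slitPlane_ne_zero h₂)
  have hab' : (α : ℂ) * a = (1 - α) * b := by exact_mod_cast hab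
  simp only [id, mul_one, show -α + 1 = 1 - α by ring, sub_add_cancel] at hA' hB' ⊢
  rw [hA', hB', show ((1 - α : ℝ) : ℂ) - 1 = ((-α : ℝ) : ℂ) by push_cast; ring,
    show (α : ℂ) - 1 = ((α - 1 : ℝ) : ℂ) by push_cast; ring]
  push_cast
  linear_combination (z + a) ^ (-(α : ℂ)) * (z - b) ^ ((α : ℂ) - 1) * hab'

theorem hasDerivAt_im_slitMap_I_mul (hab : α * a = (1 - α) * b) {y : ℝ} (hy : y ≠ 0) :
    HasDerivAt (fun t : ℝ => (slitMap a b α (I * t)).im)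
      (-y * ((I * y + a) ^ ((-α : ℝ) : ℂ) * (I * y - b) ^ ((α - 1 : ℝ) : ℂ)).im) y := by
  have hslit : ∀ c : ℝ, I * y + c ∈ slitPlane :=
    fun c => mem_slitPlane_iff.2 (Or.inr (by simpa using hy))
  have hG := hasDerivAt_slitMap hab (hslit a) (by simpa [sub_eq_add_neg] using hslit (-b))
  have hline : HasDerivAt (fun t : ℂ => I * t) I (y : ℂ) := by
    simpa using (hasDerivAt_id (y : ℂ)).const_mul I
  have hcurve := (hG.comp (y : ℂ) hline).comp_ofReal
  refine (imCLM.hasFDerivAt.comp_hasDerivAt y hcurve).congr_deriv ?_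
  rw [imCLM_apply, show ∀ P Q : ℂ, I * y * P * Q * I = ((-y : ℝ) : ℂ) * (P * Q) from
    fun P Q => by push_cast; linear_combination (y * P * Q) * I_sq, im_ofReal_mul]

theorem continuousWithinAt_slitMap {z : ℂ} (h₁ : z + a ≠ 0) (h₂ : z - b ≠ 0) :
    ContinuousWithinAt (slitMap a b α) {w : ℂ | 0 ≤ w.im} z := by
  have hA := (continuousWithinAt_cpow_const_of_im_nonneg ((1 - α : ℝ) : ℂ) h₁).comp
    (f := (· + (a : ℂ))) (continuous_add_const _).continuousWithinAt
    fun w (hw : 0 ≤ w.im) => by simpa using hw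
  have hB := (continuousWithinAt_cpow_const_of_im_nonneg ((α : ℝ) : ℂ) h₂).comp
    (f := (· - (b : ℂ))) (continuous_sub_right _).continuousWithinAt
    fun w (hw : 0 ≤ w.im) => by simpa using hw
  exact hA.mul hB

theorem strictMonoOn_im_slitMap_I_mul (ha : a ≠ 0) (hb : b ≠ 0) (hα : α ∈ Ioo (0 : ℝ) 1)
    (hab : α * a = (1 - α) * b) :
    StrictMonoOn (fun y : ℝ => (slitMap a b α (I * y)).im) (Ici 0) := by
  refine strictMonoOn_of_hasDerivWithinAt_pos (convex_Ici 0) ?_ (fun y hy =>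
    (hasDerivAt_im_slitMap_I_mul hab (ne_of_gt (by simpa using hy))).hasDerivWithinAt) fun y hy => ?_
  · intro y hy
    refine continuous_im.continuousWithinAt.comp ((continuousWithinAt_slitMap ?_ ?_).comp
      (f := fun t : ℝ => I * t) (continuous_const.mul continuous_ofReal).continuousWithinAt
      fun t (ht : 0 ≤ t) => by simpa using ht) (mapsTo_univ _ _)
    · exact fun h => ha (by simpa using congrArg re h)
    · exact fun h => hb (by simpa using congrArg re h)
  · rw [interior_Ici, mem_Ioi] at hy
    refine mul_pos_of_neg_of_neg (neg_neg_of_pos hy)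
      (im_cpow_mul_cpow_neg (by simpa using hy) (by simpa using hy) ?_ ?_ ?_) <;>
      linarith [hα.1, hα.2]

end slitMap

/-- The slit map `G(z) = (z+a)^{1−α} (z−b)^{α}` (principal branches), `a, b > 0`,
`α ∈ (0,1)`, `αa = (1−α)b`. It maps `ℍ` conformally onto `ℍ` minus a straight slit
starting at `0`, with `0` mapped to the tip of the slit. The function `y ↦ Im G(iy)`
is increasing on `(0,∞)`; in particular `Im G(iy) ≥ Im G(0)` for every `y > 0`. -/
theorem slit_map_imaginary_increasing (a b α : ℝ) (ha : 0 < a) (hb : 0 < b)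
    (hα : α ∈ Set.Ioo (0:ℝ) 1) (hab : α * a = (1 - α) * b) :
    let G : ℂ → ℂ := fun z => (z + (a : ℂ)) ^ ((1 - α : ℝ) : ℂ) * (z - (b : ℂ)) ^ ((α : ℝ) : ℂ)
    StrictMonoOn (fun y : ℝ => (G (Complex.I * (y : ℂ))).im) (Set.Ioi 0) ∧
      ∀ y : ℝ, 0 < y → (G 0).im ≤ (G (Complex.I * (y : ℂ))).im := by
  intro G
  have hmono := strictMonoOn_im_slitMap_I_mul ha.ne' hb.ne' hα hab
  refine ⟨hmono.mono Ioi_subset_Ici_self, fun y hy => ?_⟩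
  simpa [G, slitMap] using (hmono self_mem_Ici hy.le hy).le
end

section
/- Let 0 < T < ∞ and let f_t^{(1)}, f_t^{(2)} satisfy the upward Loewner equation ∂_t f_t(z) = −2/(f_t(z) − W_t^{(i)}), f_0(z) = z, with continuous driving terms W^{(1)}, W^{(2)} respectively, and set ε = sup_{s∈[0,T]} |W_s^{(1)} − W_s^{(2)}|. Then for u = x + iy ∈ ℍ, |f_T^{(1)}(u) − f_T^{(2)}(u)| ≤ ε · exp{ (1/2)[ log( I_{T,y} |(f_T^{(1)})′(u)| / y ) · log( I_{T,y} |(f_T^{(2)})′(u)| / y ) ]^{1/2} + log log( I_{T,y} / y ) }, where I_{T,y} = √(4T + y²). -/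
/-!
Write `q₁ = f⁽¹⁾_t(u) - W⁽¹⁾_t`, `q₂ = f⁽²⁾_t(u) - W⁽²⁾_t` and `φ = 2 / (q₁ q₂)`. The difference
`v = f⁽¹⁾_t(u) - f⁽²⁾_t(u)` solves the linear equation `v' = φ v + φ (W⁽²⁾ - W⁽¹⁾)` with `v₀ = 0`,
so by variation of constants `|v_T| ≤ ε · sup_t exp (Re ∫_t^T φ) · ∫_0^T |φ|`. Both factors are
bounded by Cauchy–Schwarz: `|φ| = √(a₁ a₂)` with `a_i = 2 / |q_i|²`, and `Re φ ≤ √(c₁ c₂)` with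
`c_i = 2 (Re q_i)² / |q_i|⁴ = (a_i + Re (2 / q_i²)) / 2`. Along a trajectory `∂_t log Im f_t = a`
and `∂_t (Im f_t)² ≤ 4`, so `∫ a_i ≤ log (I_{T,y} / y)`; and `log |(f⁽ⁱ⁾_T)'(u)| = Re ∫ 2 / q_i²`,
because the same-driver case of the linear equation gives
`f_T(z) - f_T(u) = (z - u) exp ∫ 2 / ((f_t(z) - W_t) (f_t(u) - W_t))`.
Hence `∫ c_i ≤ ½ log (I_{T,y} |(f⁽ⁱ⁾_T)'(u)| / y)`.
-/

open Filter Set Topology MeasureTheory intervalIntegral Complex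

theorem eq_exp_integral_mul_add_integral_of_hasDerivAt {φ ψ v : ℝ → ℂ} {a b : ℝ}
    (hab : a ≤ b) (hφ : ContinuousOn φ (Icc a b)) (hψ : ContinuousOn ψ (Icc a b))
    (hv : ∀ t ∈ Icc a b, HasDerivAt v (φ t * v t + ψ t) t) :
    v b = exp (∫ t in a..b, φ t) * v a + ∫ t in a..b, exp (∫ s in t..b, φ s) * ψ t := by
  set Φ : ℝ → ℂ := fun t => ∫ s in a..t, φ s with hΦ
  have hφi : ∀ t ∈ Icc a b, IntervalIntegrable φ volume a t := fun t ht =>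
    (hφ.mono (Icc_subset_Icc_right ht.2)).intervalIntegrable_of_Icc ht.1
  have hΦc : ContinuousOn Φ (Icc a b) := by
    simpa only [uIcc_of_le hab] using continuousOn_primitive_interval (μ := volume)
      (hφ.integrableOn_Icc.mono_set (uIcc_of_le hab).le)
  -- integrating factor: `exp (-Φ) * v` is a primitive of `exp (-Φ) * ψ`
  have hK : ∫ t in a..b, exp (-Φ t) * ψ t = exp (-Φ b) * v b - exp (-Φ a) * v a := by
    refine integral_eq_sub_of_hasDeriv_right_of_le hab
      ((hΦc.neg.cexp).mul fun t ht => (hv t ht).continuousAt.continuousWithinAt)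
      (fun t ht => ?_) ((hΦc.neg.cexp.mul hψ).intervalIntegrable_of_Icc hab)
    have hΦt : HasDerivAt Φ (φ t) t :=
      integral_hasDerivAt_right (hφi t (Ioo_subset_Icc_self ht))
        ((hφ.mono Ioo_subset_Icc_self).stronglyMeasurableAtFilter isOpen_Ioo t ht)
        (hφ.continuousAt (Icc_mem_nhds ht.1 ht.2))
    refine (hΦt.neg.cexp.mul (hv t (Ioo_subset_Icc_self ht))).hasDerivWithinAt.congr_deriv ?_
    simp only [Pi.neg_apply]
    ring
  have hsub : ∀ t ∈ uIcc a b, exp (Φ b) * exp (-Φ t) = exp (∫ s in t..b, φ s) := by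
    intro t ht
    rw [uIcc_of_le hab] at ht
    rw [← Complex.exp_add, ← sub_eq_add_neg, hΦ,
      integral_interval_sub_left (hφi b ⟨hab, le_rfl⟩) (hφi t ht)]
  have hΦa : Φ a = 0 := integral_same
  calc v b = exp (Φ b) * (exp (-Φ b) * v b) := by
        rw [← mul_assoc, ← Complex.exp_add, add_neg_cancel, Complex.exp_zero, one_mul]
    _ = exp (Φ b) * v a + ∫ t in a..b, exp (Φ b) * exp (-Φ t) * ψ t := by
        simp only [mul_assoc, intervalIntegral.integral_const_mul, hK, hΦa, neg_zero,
          Complex.exp_zero, one_mul]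
        ring
    _ = _ := congrArg _ (integral_congr fun t ht => by simp only [hsub t ht])

theorem MeasureTheory.integral_sqrt_mul_le {α : Type*} [MeasurableSpace α] {μ : Measure α}
    {f g : α → ℝ} (hf : Integrable f μ) (hg : Integrable g μ) (hf0 : 0 ≤ᵐ[μ] f)
    (hg0 : 0 ≤ᵐ[μ] g) :
    ∫ x, √(f x * g x) ∂μ ≤ √((∫ x, f x ∂μ) * ∫ x, g x ∂μ) := by
  have hfg : Integrable (fun x => √(f x * g x)) μ := by
    refine ((hf.add hg).div_const 2).mono'
      (Real.continuous_sqrt.comp_aestronglyMeasurable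
        (hf.aestronglyMeasurable.mul hg.aestronglyMeasurable)) ?_
    filter_upwards [hf0, hg0] with x hx hy
    rw [Real.norm_of_nonneg (Real.sqrt_nonneg _), Real.sqrt_le_iff]
    simp only [Pi.zero_apply, Pi.add_apply] at hx hy ⊢
    exact ⟨by linarith, by nlinarith [sq_nonneg (f x - g x)]⟩
  -- `l ↦ ∫ (l √f - √g)²` is a nonnegative quadratic, so its discriminant is nonpositive
  have hquad : ∀ l : ℝ, 0 ≤ (∫ x, f x ∂μ) * (l * l) + (-2 * ∫ x, √(f x * g x) ∂μ) * l +
      ∫ x, g x ∂μ := by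
    intro l
    have hint : ∫ x, (l * l * f x - 2 * l * √(f x * g x) + g x) ∂μ =
        (∫ x, f x ∂μ) * (l * l) + (-2 * ∫ x, √(f x * g x) ∂μ) * l + ∫ x, g x ∂μ := by
      have hsub : Integrable (fun x => l * l * f x - 2 * l * √(f x * g x)) μ :=
        (hf.const_mul _).sub (hfg.const_mul _)
      rw [integral_add hsub hg, integral_sub (hf.const_mul _) (hfg.const_mul _),
        integral_const_mul, integral_const_mul]
      ring
    rw [← hint]
    refine integral_nonneg_of_ae ?_
    filter_upwards [hf0, hg0] with x hx hy
    have hsq : l * l * f x - 2 * l * √(f x * g x) + g x = (l * √(f x) - √(g x)) ^ 2 := by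
      rw [sub_sq, mul_pow, Real.sq_sqrt hx, Real.sq_sqrt hy, Real.sqrt_mul hx]
      ring
    simp only [Pi.zero_apply, hsq]
    positivity
  have hd := discrim_le_zero hquad
  rw [discrim] at hd
  exact (le_abs_self _).trans (Real.abs_le_sqrt (by nlinarith))

theorem intervalIntegral.integral_sqrt_mul_le {f g : ℝ → ℝ} {a b : ℝ} (hab : a ≤ b)
    (hf : IntervalIntegrable f volume a b) (hg : IntervalIntegrable g volume a b)
    (hf0 : ∀ x ∈ Ioc a b, 0 ≤ f x) (hg0 : ∀ x ∈ Ioc a b, 0 ≤ g x) :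
    ∫ x in a..b, √(f x * g x) ≤ √((∫ x in a..b, f x) * ∫ x in a..b, g x) := by
  simp only [integral_of_le hab]
  exact MeasureTheory.integral_sqrt_mul_le hf.1 hg.1
    (ae_restrict_of_forall_mem measurableSet_Ioc hf0)
    (ae_restrict_of_forall_mem measurableSet_Ioc hg0)

theorem Complex.im_sub_dist_le (z u : ℂ) : u.im - dist z u ≤ z.im := by
  have := (abs_im_le_norm (u - z)).trans_eq (dist_eq_norm u z).symm
  rw [sub_im, dist_comm] at this
  linarith [le_abs_self (u.im - z.im)]

theorem Complex.re_two_div_sq_add_two_div_normSq (q : ℂ) :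
    (2 / q ^ 2).re + 2 / normSq q = 4 * q.re ^ 2 / normSq q ^ 2 := by
  rcases eq_or_ne q 0 with rfl | hq
  · simp
  have hn : normSq q ≠ 0 := normSq_eq_zero.not.mpr hq
  rw [div_re, map_pow]
  simp only [sq, mul_re, mul_im, re_ofNat, im_ofNat, zero_mul, zero_div, add_zero]
  rw [normSq_apply] at hn ⊢
  field_simp
  ring

theorem Complex.re_two_div_mul_le_sqrt {q₁ q₂ : ℂ} (h : 0 ≤ q₁.im * q₂.im) :
    (2 / (q₁ * q₂)).re ≤
      √(2 * q₁.re ^ 2 / normSq q₁ ^ 2 * (2 * q₂.re ^ 2 / normSq q₂ ^ 2)) := by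
  have hN : 0 ≤ normSq q₁ * normSq q₂ := mul_nonneg (normSq_nonneg q₁) (normSq_nonneg q₂)
  have hsqrt : √(2 * q₁.re ^ 2 / normSq q₁ ^ 2 * (2 * q₂.re ^ 2 / normSq q₂ ^ 2)) =
      2 * |q₁.re * q₂.re| / (normSq q₁ * normSq q₂) := by
    rw [← Real.sqrt_sq (div_nonneg (by positivity) hN)]
    congr 1
    rw [div_pow, mul_pow, sq_abs]
    ring
  rw [hsqrt, div_re, normSq_mul]
  simp only [re_ofNat, im_ofNat, mul_re, mul_im, zero_mul, zero_div, add_zero]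
  gcongr
  linarith [le_abs_self (q₁.re * q₂.re)]

theorem Complex.norm_two_div_mul (q₁ q₂ : ℂ) :
    ‖2 / (q₁ * q₂)‖ = √(2 / normSq q₁ * (2 / normSq q₂)) := by
  rw [← Real.sqrt_sq (norm_nonneg (2 / (q₁ * q₂)))]
  congr 1
  rw [norm_div, norm_mul, RCLike.norm_ofNat, div_pow, mul_pow, ← normSq_eq_norm_sq,
    ← normSq_eq_norm_sq]
  ring

def IsLoewnerTrajectory (W : ℝ → ℝ) (T : ℝ) (F : ℝ → ℂ) : Prop :=
  ∀ t ∈ Icc 0 T, HasDerivAt F (-2 / (F t - W t)) t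

namespace IsLoewnerTrajectory

variable {V W : ℝ → ℝ} {T : ℝ} {F G : ℝ → ℂ}

theorem mono (hF : IsLoewnerTrajectory W T F) {r : ℝ} (hr : r ≤ T) :
    IsLoewnerTrajectory W r F :=
  fun t ht => hF t (Icc_subset_Icc_right hr ht)

theorem continuousOn (hF : IsLoewnerTrajectory W T F) : ContinuousOn F (Icc 0 T) :=
  fun t ht => (hF t ht).continuousAt.continuousWithinAt

theorem hasDerivAt_im (hF : IsLoewnerTrajectory W T F) {t : ℝ} (ht : t ∈ Icc 0 T) :
    HasDerivAt (fun s => (F s).im) (2 * (F t).im / normSq (F t - W t)) t := by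
  have h : HasDerivAt (fun s => (F s).im) (-2 / (F t - W t)).im t :=
    imCLM.hasFDerivAt.comp_hasDerivAt t (hF t ht)
  convert h using 1
  simp [div_im]
  ring

theorem im_le_im (hF : IsLoewnerTrajectory W T F) (h0 : 0 < (F 0).im) :
    ∀ t ∈ Icc 0 T, (F 0).im ≤ (F t).im := by
  -- at the level `(F 0).im > 0` the imaginary part is strictly increasing
  have key := image_le_of_deriv_right_lt_deriv_boundary (a := 0) (b := T)
    (f := fun s => -(F s).im) (B := fun _ => -(F 0).im) (B' := fun _ => 0)
    (fun t ht => (hF.hasDerivAt_im ht).continuousAt.neg.continuousWithinAt)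
    (fun t ht => (hF.hasDerivAt_im (Ico_subset_Icc_self ht)).neg.hasDerivWithinAt)
    le_rfl (fun _ => hasDerivAt_const _ _) ?_
  · exact fun t ht => neg_le_neg_iff.mp (key ht)
  intro t _ ht
  have hy : 0 < (F t).im := by linarith
  have hq : 0 < normSq (F t - W t) :=
    (mul_pos hy hy).trans_le (by simpa using im_sq_le_normSq (F t - W t))
  simp only [neg_lt_zero]
  positivity

theorem im_le_norm_sub (hF : IsLoewnerTrajectory W T F) (h0 : 0 < (F 0).im) {t : ℝ}
    (ht : t ∈ Icc 0 T) : (F 0).im ≤ ‖F t - W t‖ := by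
  simpa using (hF.im_le_im h0 t ht).trans (by simpa using im_le_norm (F t - W t))

theorem sub_ne_zero (hF : IsLoewnerTrajectory W T F) (h0 : 0 < (F 0).im) {t : ℝ}
    (ht : t ∈ Icc 0 T) : F t - W t ≠ 0 :=
  norm_pos_iff.mp (h0.trans_le (hF.im_le_norm_sub h0 ht))

theorem continuousOn_sub (hF : IsLoewnerTrajectory W T F) (hW : Continuous W) :
    ContinuousOn (fun t => F t - W t) (Icc 0 T) :=
  hF.continuousOn.sub (continuous_ofReal.comp hW).continuousOn

theorem continuousOn_two_div_normSq (hF : IsLoewnerTrajectory W T F) (hW : Continuous W)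
    (h0 : 0 < (F 0).im) : ContinuousOn (fun t => 2 / normSq (F t - W t)) (Icc 0 T) :=
  continuousOn_const.div (continuous_normSq.comp_continuousOn (hF.continuousOn_sub hW))
    fun _ ht => (normSq_pos.mpr (hF.sub_ne_zero h0 ht)).ne'

theorem continuousOn_two_mul_re_sq_div (hF : IsLoewnerTrajectory W T F) (hW : Continuous W)
    (h0 : 0 < (F 0).im) :
    ContinuousOn (fun t => 2 * (F t - W t).re ^ 2 / normSq (F t - W t) ^ 2) (Icc 0 T) :=
  (continuousOn_const.mul ((continuous_re.comp_continuousOn (hF.continuousOn_sub hW)).pow 2)).div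
    ((continuous_normSq.comp_continuousOn (hF.continuousOn_sub hW)).pow 2)
    fun _ ht => pow_ne_zero 2 (normSq_pos.mpr (hF.sub_ne_zero h0 ht)).ne'

theorem continuousOn_two_div_mul (hF : IsLoewnerTrajectory V T F)
    (hG : IsLoewnerTrajectory W T G) (hV : Continuous V) (hW : Continuous W)
    (hF0 : 0 < (F 0).im) (hG0 : 0 < (G 0).im) :
    ContinuousOn (fun t => 2 / ((F t - V t) * (G t - W t))) (Icc 0 T) :=
  continuousOn_const.div ((hF.continuousOn_sub hV).mul (hG.continuousOn_sub hW))
    fun _ ht => mul_ne_zero (hF.sub_ne_zero hF0 ht) (hG.sub_ne_zero hG0 ht)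

theorem integral_two_div_normSq (hF : IsLoewnerTrajectory W T F) (hW : Continuous W)
    (h0 : 0 < (F 0).im) (hT : 0 ≤ T) :
    ∫ t in 0..T, 2 / normSq (F t - W t) = Real.log (F T).im - Real.log (F 0).im := by
  refine integral_eq_sub_of_hasDerivAt (f := fun t => Real.log (F t).im) (fun t ht => ?_)
    ((hF.continuousOn_two_div_normSq hW h0).intervalIntegrable_of_Icc hT)
  rw [uIcc_of_le hT] at ht
  have hy := h0.trans_le (hF.im_le_im h0 t ht)
  refine ((hF.hasDerivAt_im ht).log hy.ne').congr_deriv ?_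
  field_simp

theorem im_sq_le (hF : IsLoewnerTrajectory W T F) (hT : 0 ≤ T) :
    (F T).im ^ 2 ≤ (F 0).im ^ 2 + 4 * T := by
  -- `∂_t (Im F)² = 4 (Im F)² / |F - W|² ≤ 4`
  refine image_le_of_deriv_right_le_deriv_boundary (a := 0) (b := T)
    (f := fun s => (F s).im ^ 2) (B := fun s => (F 0).im ^ 2 + 4 * s) (B' := fun _ => 4)
    (fun t ht => ((hF.hasDerivAt_im ht).pow 2).continuousAt.continuousWithinAt)
    (fun t ht => ((hF.hasDerivAt_im (Ico_subset_Icc_self ht)).pow 2).hasDerivWithinAt)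
    (by simp) (by fun_prop)
    (fun t _ => (((hasDerivAt_id t).const_mul 4).const_add _).hasDerivWithinAt.congr_deriv
      (by simp)) (fun t _ => ?_) (right_mem_Icc.mpr hT)
  have hle := im_sq_le_normSq (F t - W t)
  simp only [sub_im, ofReal_im, sub_zero] at hle
  have hratio : (F t).im * (F t).im / normSq (F t - W t) ≤ 1 :=
    div_le_one_of_le₀ hle (normSq_nonneg _)
  calc _ = 4 * ((F t).im * (F t).im / normSq (F t - W t)) := by ring
    _ ≤ 4 := by linarith

theorem integral_two_div_normSq_le (hF : IsLoewnerTrajectory W T F) (hW : Continuous W)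
    (h0 : 0 < (F 0).im) (hT : 0 ≤ T) :
    ∫ t in 0..T, 2 / normSq (F t - W t) ≤ Real.log (√(4 * T + (F 0).im ^ 2) / (F 0).im) := by
  have hFT : 0 < (F T).im := h0.trans_le (hF.im_le_im h0 T (right_mem_Icc.mpr hT))
  rw [hF.integral_two_div_normSq hW h0 hT, Real.log_div (by positivity) h0.ne']
  gcongr
  exact (Real.le_sqrt' hFT).mpr (by linarith [hF.im_sq_le hT])

theorem integral_two_mul_re_sq_div_le (hF : IsLoewnerTrajectory W T F) (hW : Continuous W)
    (h0 : 0 < (F 0).im) (hT : 0 ≤ T) :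
    ∫ t in 0..T, 2 * (F t - W t).re ^ 2 / normSq (F t - W t) ^ 2 ≤
      (Real.log (√(4 * T + (F 0).im ^ 2) / (F 0).im) +
        (∫ t in 0..T, 2 / (F t - W t) ^ 2).re) / 2 := by
  have hsq : ContinuousOn (fun t => 2 / (F t - W t) ^ 2) (Icc 0 T) :=
    continuousOn_const.div ((hF.continuousOn_sub hW).pow 2)
      fun t ht => pow_ne_zero 2 (hF.sub_ne_zero h0 ht)
  have hre : (∫ t in 0..T, 2 / (F t - W t) ^ 2).re =
      ∫ t in 0..T, (2 / (F t - W t) ^ 2).re := by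
    simpa using (intervalIntegral_re (hsq.intervalIntegrable_of_Icc hT)).symm
  have hsqre : IntervalIntegrable (fun t => (2 / (F t - W t) ^ 2).re) volume 0 T :=
    (continuous_re.comp_continuousOn hsq).intervalIntegrable_of_Icc hT
  have hpt : ∀ t, 2 * (F t - W t).re ^ 2 / normSq (F t - W t) ^ 2 =
      ((2 / (F t - W t) ^ 2).re + 2 / normSq (F t - W t)) / 2 := fun t => by
    rw [re_two_div_sq_add_two_div_normSq]; ring
  simp only [hpt, intervalIntegral.integral_div]
  rw [integral_add hsqre ((hF.continuousOn_two_div_normSq hW h0).intervalIntegrable_of_Icc hT),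
    hre]
  linarith [hF.integral_two_div_normSq_le hW h0 hT]

theorem hasDerivAt_sub (hF : IsLoewnerTrajectory V T F) (hG : IsLoewnerTrajectory W T G)
    (hF0 : 0 < (F 0).im) (hG0 : 0 < (G 0).im) {t : ℝ} (ht : t ∈ Icc 0 T) :
    HasDerivAt (fun s => F s - G s) (2 / ((F t - V t) * (G t - W t)) * (F t - G t) +
      2 / ((F t - V t) * (G t - W t)) * (W t - V t)) t := by
  refine ((hF t ht).sub (hG t ht)).congr_deriv ?_
  have h1 := hF.sub_ne_zero hF0 ht
  have h2 := hG.sub_ne_zero hG0 ht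
  field_simp
  ring

theorem sub_eq_exp_integral_mul (hF : IsLoewnerTrajectory W T F)
    (hG : IsLoewnerTrajectory W T G) (hW : Continuous W) (hF0 : 0 < (F 0).im)
    (hG0 : 0 < (G 0).im) (hT : 0 ≤ T) :
    F T - G T = exp (∫ t in 0..T, 2 / ((F t - W t) * (G t - W t))) * (F 0 - G 0) := by
  have h := eq_exp_integral_mul_add_integral_of_hasDerivAt (ψ := 0) (v := fun s => F s - G s)
    hT (hF.continuousOn_two_div_mul hG hW hW hF0 hG0) continuousOn_const
    fun t ht => by simpa using hF.hasDerivAt_sub hG hF0 hG0 ht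
  simpa using h

theorem norm_sub_le_exp_mul_norm_sub (hF : IsLoewnerTrajectory W T F)
    (hG : IsLoewnerTrajectory W T G) (hW : Continuous W) (hF0 : 0 < (F 0).im)
    (hG0 : 0 < (G 0).im) (hT : 0 ≤ T) :
    ‖F T - G T‖ ≤ Real.exp (2 * T / ((F 0).im * (G 0).im)) * ‖F 0 - G 0‖ := by
  rw [hF.sub_eq_exp_integral_mul hG hW hF0 hG0 hT, norm_mul, norm_exp]
  gcongr
  have hbound : ∀ t ∈ uIoc 0 T,
      ‖2 / ((F t - W t) * (G t - W t))‖ ≤ 2 / ((F 0).im * (G 0).im) := by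
    intro t ht
    have ht' : t ∈ Icc 0 T := Ioc_subset_Icc_self (by simpa [uIoc_of_le hT] using ht)
    rw [norm_div, norm_mul, RCLike.norm_ofNat]
    gcongr
    exacts [hF.im_le_norm_sub hF0 ht', hG.im_le_norm_sub hG0 ht']
  calc _ ≤ ‖∫ t in 0..T, 2 / ((F t - W t) * (G t - W t))‖ := re_le_norm _
    _ ≤ 2 / ((F 0).im * (G 0).im) * |T - 0| := norm_integral_le_of_norm_le_const hbound
    _ = _ := by rw [sub_zero, abs_of_nonneg hT]; ring

theorem norm_sub_le_exp_mul_integral (hF : IsLoewnerTrajectory V T F)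
    (hG : IsLoewnerTrajectory W T G) (hV : Continuous V) (hW : Continuous W)
    (hF0 : 0 < (F 0).im) (hG0 : 0 < (G 0).im) (hT : 0 ≤ T) (h00 : F 0 = G 0) {ε S : ℝ}
    (hε : ∀ t ∈ Icc 0 T, |V t - W t| ≤ ε)
    (hS : ∀ t ∈ Icc 0 T, (∫ s in t..T, 2 / ((F s - V s) * (G s - W s))).re ≤ S) :
    ‖F T - G T‖ ≤ Real.exp S * (ε * ∫ t in 0..T, ‖2 / ((F t - V t) * (G t - W t))‖) := by
  have hφ := hF.continuousOn_two_div_mul hG hV hW hF0 hG0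
  have hδ : ContinuousOn (fun t => ((W t : ℂ) - V t)) (Icc 0 T) := by fun_prop
  have h := eq_exp_integral_mul_add_integral_of_hasDerivAt
    (ψ := fun t => 2 / ((F t - V t) * (G t - W t)) * (W t - V t)) hT hφ (hφ.mul hδ)
    fun t ht => hF.hasDerivAt_sub hG hF0 hG0 ht
  rw [h, h00, sub_self, mul_zero, zero_add, ← intervalIntegral.integral_const_mul,
    ← intervalIntegral.integral_const_mul]
  refine norm_integral_le_of_norm_le hT (ae_of_all _ fun t ht => ?_)
    (((continuous_norm.comp_continuousOn hφ).intervalIntegrable_of_Icc hT).const_mul _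
      |>.const_mul _)
  have ht' : t ∈ Icc 0 T := Ioc_subset_Icc_self ht
  have hδt : ‖((W t : ℂ) - V t)‖ ≤ ε := by
    rw [← ofReal_sub, norm_real, Real.norm_eq_abs, abs_sub_comm]
    exact hε t ht'
  rw [norm_mul, norm_exp, norm_mul]
  calc Real.exp (∫ s in t..T, 2 / ((F s - V s) * (G s - W s))).re *
        (‖2 / ((F t - V t) * (G t - W t))‖ * ‖((W t : ℂ) - V t)‖)
      ≤ Real.exp S * (‖2 / ((F t - V t) * (G t - W t))‖ * ε) := by
        gcongr
        exact hS t ht'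
    _ = _ := by ring

theorem re_integral_two_div_mul_le (hF : IsLoewnerTrajectory V T F)
    (hG : IsLoewnerTrajectory W T G) (hV : Continuous V) (hW : Continuous W)
    (hF0 : 0 < (F 0).im) (hG0 : 0 < (G 0).im) {t : ℝ} (ht : t ∈ Icc 0 T) :
    (∫ s in t..T, 2 / ((F s - V s) * (G s - W s))).re ≤
      √((∫ s in 0..T, 2 * (F s - V s).re ^ 2 / normSq (F s - V s) ^ 2) *
        ∫ s in 0..T, 2 * (G s - W s).re ^ 2 / normSq (G s - W s) ^ 2) := by
  set cF := fun s => 2 * (F s - V s).re ^ 2 / normSq (F s - V s) ^ 2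
  set cG := fun s => 2 * (G s - W s).re ^ 2 / normSq (G s - W s) ^ 2
  have hsub : Icc t T ⊆ Icc 0 T := Icc_subset_Icc_left ht.1
  have hcF := hF.continuousOn_two_mul_re_sq_div hV hF0
  have hcG := hG.continuousOn_two_mul_re_sq_div hW hG0
  have hφ := (hF.continuousOn_two_div_mul hG hV hW hF0 hG0).mono hsub
  have hcF0 : ∀ s, 0 ≤ cF s := fun s => by positivity
  have hcG0 : ∀ s, 0 ≤ cG s := fun s => by positivity
  have hmono : ∀ c : ℝ → ℝ, ContinuousOn c (Icc 0 T) → (∀ s, 0 ≤ c s) →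
      ∫ s in t..T, c s ≤ ∫ s in 0..T, c s := fun c hc hc0 =>
    integral_mono_interval ht.1 ht.2 le_rfl (ae_of_all _ hc0)
      (hc.intervalIntegrable_of_Icc (ht.1.trans ht.2))
  calc (∫ s in t..T, 2 / ((F s - V s) * (G s - W s))).re
      = ∫ s in t..T, (2 / ((F s - V s) * (G s - W s))).re := by
        simpa using (intervalIntegral_re (hφ.intervalIntegrable_of_Icc ht.2)).symm
    _ ≤ ∫ s in t..T, √(cF s * cG s) := by
        refine integral_mono_on ht.2
          ((continuous_re.comp_continuousOn hφ).intervalIntegrable_of_Icc ht.2)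
          ((Real.continuous_sqrt.comp_continuousOn ((hcF.mono hsub).mul (hcG.mono hsub)))
            |>.intervalIntegrable_of_Icc ht.2) fun s hs => re_two_div_mul_le_sqrt ?_
        simpa using (mul_pos (hF0.trans_le (hF.im_le_im hF0 s (hsub hs)))
          (hG0.trans_le (hG.im_le_im hG0 s (hsub hs)))).le
    _ ≤ √((∫ s in t..T, cF s) * ∫ s in t..T, cG s) :=
        intervalIntegral.integral_sqrt_mul_le ht.2
          ((hcF.mono hsub).intervalIntegrable_of_Icc ht.2)
          ((hcG.mono hsub).intervalIntegrable_of_Icc ht.2) (fun s _ => hcF0 s) (fun s _ => hcG0 s)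
    _ ≤ √((∫ s in 0..T, cF s) * ∫ s in 0..T, cG s) := by
        gcongr
        · exact integral_nonneg ht.2 fun s _ => hcG0 s
        · exact integral_nonneg (ht.1.trans ht.2) fun s _ => hcF0 s
        · exact hmono cF hcF hcF0
        · exact hmono cG hcG hcG0

theorem integral_norm_two_div_mul_le (hF : IsLoewnerTrajectory V T F)
    (hG : IsLoewnerTrajectory W T G) (hV : Continuous V) (hW : Continuous W)
    (hF0 : 0 < (F 0).im) (hG0 : 0 < (G 0).im) (hT : 0 ≤ T) :
    ∫ t in 0..T, ‖2 / ((F t - V t) * (G t - W t))‖ ≤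
      √((∫ t in 0..T, 2 / normSq (F t - V t)) * ∫ t in 0..T, 2 / normSq (G t - W t)) := by
  simp only [norm_two_div_mul]
  exact intervalIntegral.integral_sqrt_mul_le hT
    ((hF.continuousOn_two_div_normSq hV hF0).intervalIntegrable_of_Icc hT)
    ((hG.continuousOn_two_div_normSq hW hG0).intervalIntegrable_of_Icc hT)
    (fun t _ => div_nonneg zero_le_two (normSq_nonneg _))
    (fun t _ => div_nonneg zero_le_two (normSq_nonneg _))

theorem norm_sub_le_of_abs_sub_le (hF : IsLoewnerTrajectory V T F)
    (hG : IsLoewnerTrajectory W T G) (hV : Continuous V) (hW : Continuous W) (hT : 0 < T)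
    (h00 : F 0 = G 0) (hF0 : 0 < (F 0).im) {ε : ℝ} (hε : ∀ t ∈ Icc 0 T, |V t - W t| ≤ ε) :
    ‖F T - G T‖ ≤ ε * Real.exp (1 / 2 *
      √((Real.log (√(4 * T + (F 0).im ^ 2) / (F 0).im) +
          (∫ t in 0..T, 2 / (F t - V t) ^ 2).re) *
        (Real.log (√(4 * T + (F 0).im ^ 2) / (F 0).im) +
          (∫ t in 0..T, 2 / (G t - W t) ^ 2).re)) +
      Real.log (Real.log (√(4 * T + (F 0).im ^ 2) / (F 0).im))) := by
  have hG0 : 0 < (G 0).im := h00 ▸ hF0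
  set y := (F 0).im
  set Λ := Real.log (√(4 * T + y ^ 2) / y)
  set LF := Λ + (∫ t in 0..T, 2 / (F t - V t) ^ 2).re
  set LG := Λ + (∫ t in 0..T, 2 / (G t - W t) ^ 2).re
  have hΛ : 0 < Λ :=
    Real.log_pos <| (one_lt_div hF0).mpr <| Real.lt_sqrt_of_sq_lt (by linarith)
  have hcF := hF.integral_two_mul_re_sq_div_le hV hF0 hT.le
  have hcG := hG.integral_two_mul_re_sq_div_le hW hG0 hT.le
  have hAF := hF.integral_two_div_normSq_le hV hF0 hT.le
  have hAG := hG.integral_two_div_normSq_le hW hG0 hT.le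
  rw [← h00] at hcG hAG
  have hcG0 : 0 ≤ ∫ t in 0..T, 2 * (G t - W t).re ^ 2 / normSq (G t - W t) ^ 2 :=
    integral_nonneg hT.le fun t _ => by positivity
  have hS : ∀ t ∈ Icc 0 T, (∫ s in t..T, 2 / ((F s - V s) * (G s - W s))).re ≤
      1 / 2 * √(LF * LG) := by
    intro t ht
    have hLF : 0 ≤ LF / 2 :=
      (integral_nonneg hT.le fun t _ => by positivity).trans hcF
    calc _ ≤ _ := hF.re_integral_two_div_mul_le hG hV hW hF0 hG0 ht
      _ ≤ √(LF / 2 * (LG / 2)) := Real.sqrt_le_sqrt (mul_le_mul hcF hcG hcG0 hLF)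
      _ = 1 / 2 * √(LF * LG) := by
        rw [show LF / 2 * (LG / 2) = (1 / 2) ^ 2 * (LF * LG) by ring,
          Real.sqrt_mul (by positivity), Real.sqrt_sq (by positivity)]
  have hforce : ∫ t in 0..T, ‖2 / ((F t - V t) * (G t - W t))‖ ≤ Λ := by
    refine (hF.integral_norm_two_div_mul_le hG hV hW hF0 hG0 hT.le).trans ?_
    rw [← Real.sqrt_mul_self hΛ.le]
    exact Real.sqrt_le_sqrt (mul_le_mul hAF hAG
      (integral_nonneg hT.le fun t _ => div_nonneg zero_le_two (normSq_nonneg _)) hΛ.le)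
  have hε0 : 0 ≤ ε := (abs_nonneg _).trans (hε 0 (left_mem_Icc.mpr hT.le))
  calc ‖F T - G T‖
      ≤ Real.exp (1 / 2 * √(LF * LG)) *
          (ε * ∫ t in 0..T, ‖2 / ((F t - V t) * (G t - W t))‖) :=
        hF.norm_sub_le_exp_mul_integral hG hV hW hF0 hG0 hT.le h00 hε hS
    _ ≤ Real.exp (1 / 2 * √(LF * LG)) * (ε * Λ) := by gcongr
    _ = ε * Real.exp (1 / 2 * √(LF * LG) + Real.log Λ) := by
        rw [Real.exp_add, Real.exp_log hΛ]; ring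

end IsLoewnerTrajectory

def IsLoewnerFlow (W : ℝ → ℝ) (T : ℝ) (f : ℝ → ℂ → ℂ) : Prop :=
  ∀ z : ℂ, 0 < z.im → f 0 z = z ∧ IsLoewnerTrajectory W T (fun t => f t z)

namespace IsLoewnerFlow

variable {W : ℝ → ℝ} {T : ℝ} {f : ℝ → ℂ → ℂ}

theorem im_pos (hf : IsLoewnerFlow W T f) {z : ℂ} (hz : 0 < z.im) : 0 < (f 0 z).im := by
  rwa [(hf z hz).1]

theorem norm_sub_le_exp_mul_norm_sub (hf : IsLoewnerFlow W T f) (hW : Continuous W)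
    {z u : ℂ} (hz : 0 < z.im) (hu : 0 < u.im) {t : ℝ} (ht : t ∈ Icc 0 T) :
    ‖f t z - f t u‖ ≤ Real.exp (2 * T / (z.im * u.im)) * ‖z - u‖ := by
  have h := ((hf z hz).2.mono ht.2).norm_sub_le_exp_mul_norm_sub ((hf u hu).2.mono ht.2) hW
    (hf.im_pos hz) (hf.im_pos hu) ht.1
  rw [(hf z hz).1, (hf u hu).1] at h
  refine h.trans (mul_le_mul_of_nonneg_right (Real.exp_le_exp.mpr ?_) (norm_nonneg _))
  exact div_le_div_of_nonneg_right (by linarith [ht.2]) (mul_pos hz hu).le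

theorem norm_two_div_mul_sub_le (hf : IsLoewnerFlow W T f) (hW : Continuous W) {z u : ℂ}
    (hu : 0 < u.im) (hz : u.im / 2 < z.im) {t : ℝ} (ht : t ∈ Icc 0 T) :
    ‖2 / ((f t z - W t) * (f t u - W t)) - 2 / ((f t u - W t) * (f t u - W t))‖ ≤
      4 * Real.exp (4 * T / u.im ^ 2) / u.im ^ 3 * ‖z - u‖ := by
  set y := u.im
  set C := Real.exp (4 * T / y ^ 2)
  have hz0 : 0 < z.im := by linarith
  have hqz := (hf z hz0).2.im_le_norm_sub (hf.im_pos hz0) ht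
  have hqu := (hf u hu).2.im_le_norm_sub (hf.im_pos hu) ht
  rw [(hf z hz0).1] at hqz
  rw [(hf u hu).1] at hqu
  have hnez := (hf z hz0).2.sub_ne_zero (hf.im_pos hz0) ht
  have hneu := (hf u hu).2.sub_ne_zero (hf.im_pos hu) ht
  have hclose : ‖f t z - f t u‖ ≤ C * ‖z - u‖ := by
    refine (hf.norm_sub_le_exp_mul_norm_sub hW hz0 hu ht).trans
      (mul_le_mul_of_nonneg_right (Real.exp_le_exp.mpr ?_) (norm_nonneg _))
    calc 2 * T / (z.im * y) ≤ 2 * T / (y / 2 * y) := by gcongr; linarith [ht.1, ht.2]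
      _ = 4 * T / y ^ 2 := by field_simp; ring
  have hdiff : 2 / ((f t z - W t) * (f t u - W t)) - 2 / ((f t u - W t) * (f t u - W t)) =
      2 * (f t u - f t z) / ((f t z - W t) * (f t u - W t) * (f t u - W t)) := by
    field_simp; ring
  calc _ = 2 * ‖f t z - f t u‖ / (‖f t z - W t‖ * ‖f t u - W t‖ * ‖f t u - W t‖) := by
        rw [hdiff, norm_div, norm_mul, norm_mul, norm_mul, norm_sub_rev (f t u),
          RCLike.norm_ofNat]
    _ ≤ 2 * (C * ‖z - u‖) / (y / 2 * y * y) := by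
        gcongr
        exact hz.le.trans hqz
    _ = _ := by field_simp; ring

theorem continuousAt_integral (hf : IsLoewnerFlow W T f) (hW : Continuous W) (hT : 0 ≤ T)
    {u : ℂ} (hu : 0 < u.im) :
    ContinuousAt (fun z => ∫ t in 0..T, 2 / ((f t z - W t) * (f t u - W t))) u := by
  set K := 4 * Real.exp (4 * T / u.im ^ 2) / u.im ^ 3
  refine continuousAt_of_locally_lipschitz (half_pos hu) (K * T) fun z hz => ?_
  have hzu : u.im / 2 < z.im := by linarith [Complex.im_sub_dist_le z u]
  have hint : ∀ w, 0 < w.im → IntervalIntegrable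
      (fun t => 2 / ((f t w - W t) * (f t u - W t))) volume 0 T := fun w hw =>
    ((hf w hw).2.continuousOn_two_div_mul (hf u hu).2 hW hW (hf.im_pos hw)
      (hf.im_pos hu)).intervalIntegrable_of_Icc hT
  rw [dist_eq_norm, dist_eq_norm, ← integral_sub (hint z (by linarith)) (hint u hu)]
  calc _ ≤ K * ‖z - u‖ * |T - 0| := norm_integral_le_of_norm_le_const fun t ht =>
        hf.norm_two_div_mul_sub_le hW hu hzu
          (Ioc_subset_Icc_self (by simpa [uIoc_of_le hT] using ht))
    _ = _ := by rw [sub_zero, abs_of_nonneg hT]; ring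

theorem hasDerivAt (hf : IsLoewnerFlow W T f) (hW : Continuous W) (hT : 0 ≤ T) {u : ℂ}
    (hu : 0 < u.im) : HasDerivAt (f T) (exp (∫ t in 0..T, 2 / (f t u - W t) ^ 2)) u := by
  have hslope : ∀ z, 0 < z.im → f T z - f T u =
      exp (∫ t in 0..T, 2 / ((f t z - W t) * (f t u - W t))) * (z - u) := fun z hz => by
    simpa [(hf z hz).1, (hf u hu).1] using
      (hf z hz).2.sub_eq_exp_integral_mul (hf u hu).2 hW (hf.im_pos hz) (hf.im_pos hu) hT
  have hpos : ∀ z ∈ Metric.ball u (u.im / 2), 0 < z.im := fun z hz => by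
    linarith [Complex.im_sub_dist_le z u, Metric.mem_ball.mp hz]
  rw [hasDerivAt_iff_tendsto_slope]
  have hlim : Tendsto (fun z => exp (∫ t in 0..T, 2 / ((f t z - W t) * (f t u - W t))))
      (𝓝[≠] u) (𝓝 (exp (∫ t in 0..T, 2 / (f t u - W t) ^ 2))) := by
    simp only [sq]
    exact (continuous_exp.continuousAt.tendsto.comp (hf.continuousAt_integral hW hT hu))
      |>.mono_left nhdsWithin_le_nhds
  refine hlim.congr' ?_
  filter_upwards [self_mem_nhdsWithin,
    mem_nhdsWithin_of_mem_nhds (Metric.ball_mem_nhds u (half_pos hu))] with z hzu hz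
  rw [slope_def_field, hslope z (hpos z hz), mul_div_assoc, div_self (sub_ne_zero.mpr hzu),
    mul_one]

theorem log_mul_norm_deriv_div (hf : IsLoewnerFlow W T f) (hW : Continuous W) (hT : 0 ≤ T)
    {c : ℝ} (hc : 0 < c) {u : ℂ} (hu : 0 < u.im) :
    Real.log (c * ‖deriv (f T) u‖ / u.im) =
      Real.log (c / u.im) + (∫ t in 0..T, 2 / (f t u - W t) ^ 2).re := by
  rw [(hf.hasDerivAt hW hT hu).deriv, norm_exp, mul_div_right_comm,
    Real.log_mul (div_pos hc hu).ne' (Real.exp_pos _).ne', Real.log_exp]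

end IsLoewnerFlow

/-- Gronwall-type perturbation estimate for the upward Loewner equation
(Johansson Viklund–Rohde–Wong, Lemma 2.3). If `f_t^{(1)}, f_t^{(2)}` solve the upward
Loewner equation on `[0,T]` with driving terms `W^{(1)}, W^{(2)}` and
`ε = sup_{s∈[0,T]} |W_s^{(1)} − W_s^{(2)}|`, then for `u = x + iy ∈ ℍ`,
`|f_T^{(1)}(u) − f_T^{(2)}(u)| ≤ ε exp{ ½ [log(I_{T,y}|(f_T^{(1)})′(u)|/y) ·
log(I_{T,y}|(f_T^{(2)})′(u)|/y)]^{1/2} + log log (I_{T,y}/y) }` with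
`I_{T,y} = √(4T + y²)`. -/
theorem upward_loewner_perturbation (T : ℝ) (hT : 0 < T)
    (W₁ W₂ : ℝ → ℝ) (hW₁ : Continuous W₁) (hW₂ : Continuous W₂)
    (f₁ f₂ : ℝ → ℂ → ℂ)
    (h₁0 : ∀ z : ℂ, 0 < z.im → f₁ 0 z = z)
    (h₂0 : ∀ z : ℂ, 0 < z.im → f₂ 0 z = z)
    (hode₁ : ∀ z : ℂ, 0 < z.im → ∀ t ∈ Set.Icc 0 T,
      HasDerivAt (fun u => f₁ u z) (-2 / (f₁ t z - W₁ t)) t)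
    (hode₂ : ∀ z : ℂ, 0 < z.im → ∀ t ∈ Set.Icc 0 T,
      HasDerivAt (fun u => f₂ u z) (-2 / (f₂ t z - W₂ t)) t)
    (ε : ℝ) (hε : ε = sSup {d : ℝ | ∃ s ∈ Set.Icc 0 T, d = |W₁ s - W₂ s|})
    (u : ℂ) (hu : 0 < u.im) :
    ‖f₁ T u - f₂ T u‖ ≤
      ε * Real.exp ((1 / 2) *
          Real.sqrt
            (Real.log (Real.sqrt (4 * T + u.im ^ 2) * ‖deriv (f₁ T) u‖ / u.im) *
              Real.log (Real.sqrt (4 * T + u.im ^ 2) * ‖deriv (f₂ T) u‖ / u.im)) +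
        Real.log (Real.log (Real.sqrt (4 * T + u.im ^ 2) / u.im))) := by
  have hf₁ : IsLoewnerFlow W₁ T f₁ := fun z hz => ⟨h₁0 z hz, hode₁ z hz⟩
  have hf₂ : IsLoewnerFlow W₂ T f₂ := fun z hz => ⟨h₂0 z hz, hode₂ z hz⟩
  have hε' : ∀ t ∈ Icc 0 T, |W₁ t - W₂ t| ≤ ε := fun t ht => by
    rw [hε]
    refine le_csSup (((isCompact_Icc (a := 0) (b := T)).image (hW₁.sub hW₂).abs).bddAbove.mono
      ?_) ⟨t, ht, rfl⟩
    rintro d ⟨s, hs, rfl⟩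
    exact ⟨s, hs, rfl⟩
  have h := (hf₁ u hu).2.norm_sub_le_of_abs_sub_le (hf₂ u hu).2 hW₁ hW₂ hT
    ((h₁0 u hu).trans (h₂0 u hu).symm) (hf₁.im_pos hu) hε'
  rw [h₁0 u hu] at h
  have hI : 0 < √(4 * T + u.im ^ 2) := Real.sqrt_pos.mpr (by positivity)
  rwa [hf₁.log_mul_norm_deriv_div hW₁ hT.le hI hu, hf₂.log_mul_norm_deriv_div hW₂ hT.le hI hu]
end

section
/- Let f : ℍ → ℍ be a conformal map with hydrodynamic normalization, i.e. lim_{z→∞}(f(z) − z) = 0, such that f is the inverse of a Loewner map g_t for some time t ∈ [0,1]. Then there is an absolute constant C such that |f′(x + iy)| ≤ C(y^{−1} + 1) for all x + iy ∈ ℍ. -/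
/-!
Along the upward Loewner flow `∂ₛ hₛ(z) = -2 / (hₛ(z) - ξₛ)` the imaginary part increases, with
`∂ₛ (Im hₛ(z))² ≤ 4`, so `Im hₜ(z)² ≤ (Im z)² + 4t`; and `‖hₛ(z) - hₛ(w)‖² / (Im hₛ(z) · Im hₛ(w))`
is nonincreasing, by the inequality `2 Re (1 / (u v)) ≤ 1 / |u|² + 1 / |v|²`. Letting `w → z` in
the latter gives `‖hₜ'(z)‖ · Im z ≤ Im hₜ(z) ≤ √((Im z)² + 4)`, hence `‖hₜ'(x + iy)‖ ≤ 1 + 2 / y`.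
-/

open Filter Set Topology
open Complex (normSq)
open ComplexConjugate

theorem antitoneOn_Icc_of_hasDerivAt_nonpos {f f' : ℝ → ℝ} {a b : ℝ}
    (hf : ∀ x ∈ Icc a b, HasDerivAt f (f' x) x) (hf' : ∀ x ∈ Ioo a b, f' x ≤ 0) :
    AntitoneOn f (Icc a b) := by
  refine antitoneOn_of_hasDerivWithinAt_nonpos (f' := f') (convex_Icc a b)
    (fun x hx => (hf x hx).continuousAt.continuousWithinAt) (fun x hx => ?_) (fun x hx => ?_)
  · rw [interior_Icc] at hx ⊢
    exact (hf x (Ioo_subset_Icc_self hx)).hasDerivWithinAt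
  · rw [interior_Icc] at hx
    exact hf' x hx

theorem Complex.im_neg_two_div (u : ℂ) : (-2 / u).im = 2 * u.im / normSq u := by
  simp [Complex.div_im, neg_div]

theorem Complex.two_mul_re_inv_mul_le (u v : ℂ) :
    2 * (u * v)⁻¹.re ≤ (normSq u)⁻¹ + (normSq v)⁻¹ := by
  have h := Complex.normSq_nonneg (u⁻¹ - conj v⁻¹)
  rw [Complex.normSq_sub, Complex.normSq_conj, Complex.conj_conj, ← mul_inv, map_inv₀,
    map_inv₀] at h
  linarith

/-- The vector field `u ↦ -2 / u` does not increase `‖u - v‖² / (Im u · Im v)`. -/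
theorem Complex.inner_sub_neg_two_div_mul_im_le {u v : ℂ} (hu : 0 < u.im) (hv : 0 < v.im) :
    2 * inner ℝ (u - v) (-2 / u - -2 / v) * (u.im * v.im) ≤
      ‖u - v‖ ^ 2 * (2 * u.im / normSq u * v.im + u.im * (2 * v.im / normSq v)) := by
  have hu0 : u ≠ 0 := fun h => by simp [h] at hu
  have hv0 : v ≠ 0 := fun h => by simp [h] at hv
  have hinner : inner ℝ (u - v) (-2 / u - -2 / v) = 2 * ‖u - v‖ ^ 2 * (u * v)⁻¹.re := by
    have hfield : -2 / u - -2 / v = 2 * (u - v) * (u * v)⁻¹ := by field_simp; ring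
    have hconj :
        2 * (u - v) * (u * v)⁻¹ * conj (u - v) = ((2 * ‖u - v‖ ^ 2 : ℝ) : ℂ) * (u * v)⁻¹ := by
      rw [mul_right_comm, mul_assoc 2, Complex.mul_conj, ← Complex.sq_norm]
      push_cast; ring
    rw [Complex.inner, hfield, hconj, Complex.re_ofReal_mul]
  have hre := Complex.two_mul_re_inv_mul_le u v
  rw [hinner]
  calc 2 * (2 * ‖u - v‖ ^ 2 * (u * v)⁻¹.re) * (u.im * v.im)
      = 2 * (‖u - v‖ ^ 2 * (u.im * v.im)) * (2 * (u * v)⁻¹.re) := by ring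
    _ ≤ 2 * (‖u - v‖ ^ 2 * (u.im * v.im)) * ((normSq u)⁻¹ + (normSq v)⁻¹) := by gcongr
    _ = _ := by ring

theorem Complex.im_mul_im_le_normSq_sub_ofReal (z : ℂ) (r : ℝ) :
    z.im * z.im ≤ normSq (z - r) := by
  simpa using Complex.im_sq_le_normSq (z - r)

def IsUpwardLoewnerCurve (ξ : ℝ → ℝ) (t : ℝ) (γ : ℝ → ℂ) : Prop :=
  ∀ s ∈ Icc 0 t, HasDerivAt γ (-2 / (γ s - ξ s)) s

namespace IsUpwardLoewnerCurve

variable {ξ : ℝ → ℝ} {t : ℝ} {γ γ₁ γ₂ : ℝ → ℂ}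

theorem hasDerivAt_im (hγ : IsUpwardLoewnerCurve ξ t γ) {s : ℝ} (hs : s ∈ Icc 0 t) :
    HasDerivAt (fun s => (γ s).im) (2 * (γ s).im / normSq (γ s - ξ s)) s := by
  have him : HasDerivAt (fun s => (γ s).im) (-2 / (γ s - ξ s)).im s :=
    Complex.imCLM.hasFDerivAt.comp_hasDerivAt s (hγ s hs)
  rwa [Complex.im_neg_two_div, Complex.sub_im, Complex.ofReal_im, sub_zero] at him

theorem im_le_im (hγ : IsUpwardLoewnerCurve ξ t γ) (h0 : 0 < (γ 0).im) :
    ∀ s ∈ Icc 0 t, (γ 0).im ≤ (γ s).im := by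
  intro s hs
  have hfence := image_le_of_deriv_right_lt_deriv_boundary (a := 0) (b := t)
    (f := fun s => -(γ s).im) (f' := fun s => -(2 * (γ s).im / normSq (γ s - ξ s)))
    (fun x hx => (hγ.hasDerivAt_im hx).neg.continuousAt.continuousWithinAt)
    (fun x hx => (hγ.hasDerivAt_im (Ico_subset_Icc_self hx)).neg.hasDerivWithinAt)
    (B := fun _ => -(γ 0).im) (B' := 0) le_rfl (fun _ => hasDerivAt_const _ _) ?_ hs
  · simpa using hfence
  · intro x _ hx
    have him : (γ x).im = (γ 0).im := neg_inj.mp hx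
    have hsq := Complex.im_mul_im_le_normSq_sub_ofReal (γ x) (ξ x)
    have hnormSq : 0 < normSq (γ x - ξ x) := by nlinarith
    simp only [Pi.zero_apply, neg_lt_zero, him]
    positivity

theorem im_sq_le (hγ : IsUpwardLoewnerCurve ξ t γ) (ht : 0 ≤ t) :
    (γ t).im ^ 2 ≤ (γ 0).im ^ 2 + 4 * t := by
  have hanti : AntitoneOn (fun s => (γ s).im ^ 2 - 4 * s) (Icc 0 t) := by
    refine antitoneOn_Icc_of_hasDerivAt_nonpos
      (fun s hs => ((hγ.hasDerivAt_im hs).pow 2).sub ((hasDerivAt_id s).const_mul 4))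
      (fun s _ => ?_)
    have hratio : (γ s).im * (γ s).im / normSq (γ s - ξ s) ≤ 1 :=
      div_le_one_of_le₀ (Complex.im_mul_im_le_normSq_sub_ofReal _ _) (Complex.normSq_nonneg _)
    calc 2 * (γ s).im ^ (2 - 1) * (2 * (γ s).im / normSq (γ s - ξ s)) - 4 * 1
        = 4 * ((γ s).im * (γ s).im / normSq (γ s - ξ s)) - 4 := by ring
      _ ≤ 0 := by linarith
  have := hanti (left_mem_Icc.2 ht) (right_mem_Icc.2 ht) ht
  simp only [mul_zero, sub_zero] at this
  linarith

theorem sq_norm_sub_mul_im_le (hγ₁ : IsUpwardLoewnerCurve ξ t γ₁)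
    (hγ₂ : IsUpwardLoewnerCurve ξ t γ₂) (h₁ : 0 < (γ₁ 0).im) (h₂ : 0 < (γ₂ 0).im) (ht : 0 ≤ t) :
    ‖γ₁ t - γ₂ t‖ ^ 2 * ((γ₁ 0).im * (γ₂ 0).im) ≤
      ‖γ₁ 0 - γ₂ 0‖ ^ 2 * ((γ₁ t).im * (γ₂ t).im) := by
  have hpos₁ : ∀ s ∈ Icc 0 t, 0 < (γ₁ s).im := fun s hs => h₁.trans_le (hγ₁.im_le_im h₁ s hs)
  have hpos₂ : ∀ s ∈ Icc 0 t, 0 < (γ₂ s).im := fun s hs => h₂.trans_le (hγ₂.im_le_im h₂ s hs)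
  have hanti : AntitoneOn (fun s => ‖γ₁ s - γ₂ s‖ ^ 2 / ((γ₁ s).im * (γ₂ s).im)) (Icc 0 t) := by
    refine antitoneOn_Icc_of_hasDerivAt_nonpos
      (fun s hs => (((hγ₁ s hs).sub (hγ₂ s hs)).norm_sq).div
        ((hγ₁.hasDerivAt_im hs).mul (hγ₂.hasDerivAt_im hs))
        (mul_pos (hpos₁ s hs) (hpos₂ s hs)).ne')
      (fun s hs => div_nonpos_of_nonpos_of_nonneg ?_ (sq_nonneg _))
    have hs' := Ioo_subset_Icc_self hs
    have key := Complex.inner_sub_neg_two_div_mul_im_le (u := γ₁ s - ξ s) (v := γ₂ s - ξ s)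
      (by simpa using hpos₁ s hs') (by simpa using hpos₂ s hs')
    simp only [sub_sub_sub_cancel_right, Complex.sub_im, Complex.ofReal_im, sub_zero] at key
    rw [Pi.sub_apply, sub_nonpos]
    exact key
  have := hanti (left_mem_Icc.2 ht) (right_mem_Icc.2 ht) ht
  rwa [div_le_div_iff₀ (mul_pos (hpos₁ t (right_mem_Icc.2 ht)) (hpos₂ t (right_mem_Icc.2 ht)))
    (mul_pos h₁ h₂)] at this

end IsUpwardLoewnerCurve

theorem sq_norm_deriv_mul_sq_im_le {f : ℂ → ℂ} {z : ℂ}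
    (hf : ∀ᶠ w in 𝓝 z, ‖f w - f z‖ ^ 2 * (w.im * z.im) ≤ ‖w - z‖ ^ 2 * ((f w).im * (f z).im)) :
    ‖deriv f z‖ ^ 2 * z.im ^ 2 ≤ (f z).im ^ 2 := by
  by_cases hdiff : DifferentiableAt ℂ f z
  swap
  · rw [deriv_zero_of_not_differentiableAt hdiff, norm_zero]
    simpa using sq_nonneg (f z).im
  have hslope : Tendsto (slope f z) (𝓝[≠] z) (𝓝 (deriv f z)) :=
    hasDerivAt_iff_tendsto_slope.mp hdiff.hasDerivAt
  have him : Tendsto (fun w => (f w).im) (𝓝[≠] z) (𝓝 (f z).im) :=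
    ((Complex.continuous_im.tendsto _).comp hdiff.continuousAt).mono_left nhdsWithin_le_nhds
  have hlim : Tendsto (fun w => ‖slope f z w‖ ^ 2 * (w.im * z.im) - (f w).im * (f z).im) (𝓝[≠] z)
      (𝓝 (‖deriv f z‖ ^ 2 * (z.im * z.im) - (f z).im * (f z).im)) :=
    ((hslope.norm.pow 2).mul
      (((Complex.continuous_im.tendsto z).mono_left nhdsWithin_le_nhds).mul_const _)).sub
      (him.mul_const _)
  have hev : ∀ᶠ w in 𝓝[≠] z, ‖slope f z w‖ ^ 2 * (w.im * z.im) - (f w).im * (f z).im ≤ 0 := by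
    filter_upwards [nhdsWithin_le_nhds hf, self_mem_nhdsWithin] with w hw hne
    have hwz : 0 < ‖w - z‖ ^ 2 := pow_pos (norm_pos_iff.2 (sub_ne_zero.2 hne)) 2
    rw [slope_def_field, norm_div, div_pow, div_mul_eq_mul_div, sub_nonpos, div_le_iff₀ hwz]
    linarith
  have := le_of_tendsto hlim hev
  linarith [sq (f z).im, sq z.im]

/-- There is an absolute constant `C` such that: whenever `f = h_t` is the inverse of a
Loewner map at time `t ∈ [0,1]` (realized as the time-`t` solution of the upward Loewner
equation with a continuous driving term) and `f` satisfies the hydrodynamic normalization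
`f(z) − z → 0` as `z → ∞`, then `|f′(x+iy)| ≤ C (y⁻¹ + 1)` for all `x + iy ∈ ℍ`. -/
theorem deriv_bound_hydrodynamic_inverse :
    ∃ C : ℝ, 0 < C ∧
      ∀ (ξ : ℝ → ℝ), Continuous ξ →
        ∀ (h : ℝ → ℂ → ℂ) (t : ℝ), 0 ≤ t → t ≤ 1 →
          (∀ z : ℂ, 0 < z.im → h 0 z = z) →
          (∀ z : ℂ, 0 < z.im → ∀ s ∈ Set.Icc 0 t,
            HasDerivAt (fun u => h u z) (-2 / (h s z - ξ s)) s) →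
          Tendsto (fun y : ℝ => h t (Complex.I * (y : ℂ)) - Complex.I * (y : ℂ))
            atTop (𝓝 0) →
          ∀ x y : ℝ, 0 < y →
            ‖deriv (h t) ((x : ℂ) + (y : ℂ) * Complex.I)‖ ≤ C * (y⁻¹ + 1) := by
  refine ⟨2, two_pos, fun ξ _ h t ht0 ht1 hinit hODE _ x y hy => ?_⟩
  set z : ℂ := (x : ℂ) + (y : ℂ) * Complex.I
  have hz : z.im = y := by simp [z]
  have hzpos : 0 < z.im := hz ▸ hy
  have hcurve : ∀ w : ℂ, 0 < w.im → IsUpwardLoewnerCurve ξ t (fun u => h u w) := hODE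
  have hcontract : ∀ᶠ w in 𝓝 z,
      ‖h t w - h t z‖ ^ 2 * (w.im * z.im) ≤ ‖w - z‖ ^ 2 * ((h t w).im * (h t z).im) := by
    filter_upwards [(isOpen_lt continuous_const Complex.continuous_im).mem_nhds hzpos]
      with w (hw : 0 < w.im)
    have := (hcurve w hw).sq_norm_sub_mul_im_le (hcurve z hzpos)
      (by rwa [hinit w hw]) (by rwa [hinit z hzpos]) ht0
    simpa only [hinit w hw, hinit z hzpos] using this
  have hderiv := sq_norm_deriv_mul_sq_im_le hcontract
  have hgrowth := (hcurve z hzpos).im_sq_le ht0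
  rw [hz] at hderiv
  simp only [hinit z hzpos, hz] at hgrowth
  have hnorm : ‖deriv (h t) z‖ * y ≤ y + 2 :=
    abs_le_of_sq_le_sq' (by nlinarith) (by positivity) |>.2
  calc ‖deriv (h t) z‖ ≤ (y + 2) / y := (le_div_iff₀ hy).2 hnorm
    _ = 1 + 2 * y⁻¹ := by field_simp
    _ ≤ 2 * (y⁻¹ + 1) := by linarith [inv_pos.2 hy]
end
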